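/- arXiv:2510.07262 — 3 statements merged into one kernel-verified Lean document; each statement's English description precedes it below -/
import Mathlib

section
/- Let n = 3 and p = 3, and let Ξ be Chatterjee's rank correlation matrix built from 3 independent uniform random permutations of {1,2,3}. Define Y_{ij} = Ξ(i,j)² + Ξ(j,i)². Then E[ Y_{12} · Y_{13} · Y_{23} ] = 5/16384, whereas E[Y_{12}] · E[Y_{13}] · E[Y_{23}] = 1/4096; in particular the random variables Y_{12}, Y_{13}, Y_{23} are not mutually independent. -/
open MeasureTheory ProbabilityTheory Filter Topology Matrix

noncomputable section

instance permMeasurableSpace (n : ℕ) : MeasurableSpace (Equiv.Perm (Fin n)) := ⊤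

/-- The uniform distribution on the permutations of `{1,…,n}`. -/
def uniformPermMeasure (n : ℕ) : Measure (Equiv.Perm (Fin n)) :=
  haveI : Nonempty (Equiv.Perm (Fin n)) := ⟨1⟩
  (PMF.uniformOfFintype (Equiv.Perm (Fin n))).toMeasure

/-- Chatterjee's functional `f_ξ(σ) = 1 - 3/(n²-1) ∑_{k=1}^{n-1} |σ(k+1) - σ(k)|`. -/
def fxi {n : ℕ} (σ : Equiv.Perm (Fin n)) : ℝ :=
  1 - 3 / ((n : ℝ) ^ 2 - 1) *
    ∑ k ∈ (Finset.range (n - 1)).attach,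
      |(((σ ⟨k.1 + 1, by have := Finset.mem_range.mp k.2; omega⟩ : Fin n) : ℕ) : ℝ) -
        (((σ ⟨k.1, by have := Finset.mem_range.mp k.2; omega⟩ : Fin n) : ℕ) : ℝ)|

/-- Chatterjee's rank correlation matrix built from `p` permutations of `{1,…,n}`. -/
def chMatrix {n p : ℕ} (σ : Fin p → Equiv.Perm (Fin n)) : Matrix (Fin p) (Fin p) ℝ :=
  Matrix.of fun i j => if i = j then 1 else fxi (σ j * (σ i)⁻¹)

/-- The symmetrization `Φ = (Ξ + Ξᵀ)/2`. -/
def chPhi {n p : ℕ} (σ : Fin p → Equiv.Perm (Fin n)) : Matrix (Fin p) (Fin p) ℝ :=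
  (1 / 2 : ℝ) • (chMatrix σ + (chMatrix σ)ᵀ)

/-- The Gram-type symmetrization `Ψ = (Ξ - I)(Ξ - I)ᵀ`. -/
def chPsi {n p : ℕ} (σ : Fin p → Equiv.Perm (Fin n)) : Matrix (Fin p) (Fin p) ℝ :=
  (chMatrix σ - 1) * (chMatrix σ - 1)ᵀ

theorem chPhi_isHermitian {n p : ℕ} (σ : Fin p → Equiv.Perm (Fin n)) :
    (chPhi σ).IsHermitian := by
  show (chPhi σ)ᴴ = chPhi σ
  ext i j
  simp [chPhi, Matrix.conjTranspose_apply, Matrix.transpose_apply, Matrix.add_apply,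
    Matrix.smul_apply]
  ring

theorem chPsi_isHermitian {n p : ℕ} (σ : Fin p → Equiv.Perm (Fin n)) :
    (chPsi σ).IsHermitian := by
  have h : (chMatrix σ - 1)ᵀ = (chMatrix σ - 1)ᴴ := by
    ext i j
    simp [Matrix.conjTranspose_apply]
  rw [chPsi, h]
  exact Matrix.isHermitian_mul_conjTranspose_self _

/-- Empirical spectral distribution of a Hermitian real matrix. -/
def ESD {p : ℕ} {A : Matrix (Fin p) (Fin p) ℝ} (hA : A.IsHermitian) : Measure ℝ :=
  (p : ENNReal)⁻¹ • ∑ i : Fin p, Measure.dirac (hA.eigenvalues i)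

/-- The semicircle law with center `u` and radius `r`. -/
def semicircleLaw (u r : ℝ) : Measure ℝ :=
  volume.withDensity fun x =>
    ENNReal.ofReal
      ((Set.Icc (u - r) (u + r)).indicator
        (fun y => 2 / (Real.pi * r ^ 2) * Real.sqrt (r ^ 2 - (y - u) ^ 2)) x)

/-- The Marchenko–Pastur law `MP(1,σ²)`. -/
def mpLawOne (s2 : ℝ) : Measure ℝ :=
  volume.withDensity fun x =>
    ENNReal.ofReal
      ((Set.Icc 0 (4 * s2)).indicator
        (fun y => Real.sqrt ((4 * s2 - y) * y) / (2 * Real.pi * y * s2)) x)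


/-- `Y_{ij} = Ξ(i,j)² + Ξ(j,i)²` for the Chatterjee matrix built from `σ`. -/
def Ypair {Ω : Type*} (σ : Fin 3 → Ω → Equiv.Perm (Fin 3)) (i j : Fin 3) : Ω → ℝ :=
  fun ω => (chMatrix (fun u => σ u ω) i j) ^ 2 + (chMatrix (fun u => σ u ω) j i) ^ 2

/-!
For `n = 3`, `f_ξ(τ)` is `1/4` when `τ` is the identity or the reversal and `-1/8` otherwise.
These two permutations form a subgroup `H`, closed under inversion, so
`Y_ij = w(σ_j σ_i⁻¹) / 32` where `w = 4` on `H` and `w = 1` off `H`. The ratios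
`b = σ₂σ₁⁻¹` and `c = σ₃σ₁⁻¹` are independent and uniform, and `σ₃σ₂⁻¹ = c b⁻¹`, so every
expectation becomes an average over `(b, c) ∈ S₃²`. Each `Y_ij` has mean `1/16`. But since `H` is
a subgroup, `c b⁻¹ ∈ H` is positively correlated with `b, c ∈ H`, and the triple product has mean
`360 / (36 · 32³) = 5/16384 > 4/16384`.
-/

section UniformTuple

variable {Ω ι α : Type*} [MeasurableSpace Ω] {μ : Measure Ω} [IsProbabilityMeasure μ]
  [Fintype ι] [DecidableEq ι] [Fintype α] [Nonempty α] [MeasurableSpace α]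
  [DiscreteMeasurableSpace α]
  {X : ι → Ω → α}

lemma ProbabilityTheory.iIndepFun.map_fun_eq_uniformOfFintype (hX : ∀ i, Measurable (X i))
    (hunif : ∀ i, μ.map (X i) = (PMF.uniformOfFintype α).toMeasure) (hindep : iIndepFun X μ) :
    μ.map (fun ω i => X i ω) = (PMF.uniformOfFintype (ι → α)).toMeasure := by
  refine Measure.ext_of_singleton fun x => ?_
  rw [hindep.map_fun_eq_pi_map fun i => (hX i).aemeasurable, Measure.pi_singleton,
    PMF.toMeasure_apply_singleton _ _ (measurableSet_singleton x)]
  simp only [hunif, PMF.toMeasure_apply_singleton _ _ (measurableSet_singleton _),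
    PMF.uniformOfFintype_apply, Finset.prod_const, Finset.card_univ, Fintype.card_pi,
    ENNReal.inv_pow, Nat.cast_pow]

lemma ProbabilityTheory.iIndepFun.integral_comp_eq_sum_div (hX : ∀ i, Measurable (X i))
    (hunif : ∀ i, μ.map (X i) = (PMF.uniformOfFintype α).toMeasure) (hindep : iIndepFun X μ)
    (f : (ι → α) → ℝ) :
    ∫ ω, f (fun i => X i ω) ∂μ = (∑ x, f x) / Fintype.card α ^ Fintype.card ι := by
  rw [← integral_map (measurable_pi_lambda _ hX).aemeasurable
      (measurable_of_countable f).aestronglyMeasurable,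
    hindep.map_fun_eq_uniformOfFintype hX hunif, PMF.integral_eq_sum]
  simp [PMF.uniformOfFintype_apply, div_eq_inv_mul, Finset.mul_sum]

end UniformTuple

lemma Fintype.sum_pi_fin_three {α M : Type*} [Fintype α] [AddCommMonoid M]
    (f : (Fin 3 → α) → M) : ∑ x, f x = ∑ a, ∑ b, ∑ c, f ![a, b, c] := by
  rw [← (Fin.consEquiv fun _ => α).sum_comp, Fintype.sum_prod_type]
  refine Finset.sum_congr rfl fun a _ => ?_
  rw [← (Fin.consEquiv fun _ => α).sum_comp, Fintype.sum_prod_type]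
  refine Finset.sum_congr rfl fun b _ => ?_
  rw [← (Fin.consEquiv fun _ => α).sum_comp, Fintype.sum_prod_type]
  refine Finset.sum_congr rfl fun c _ => ?_
  rw [Fintype.sum_unique]
  rfl

section Ratios

variable {G M : Type*} [Group G] [Fintype G]

lemma sum_ratios_fin_three [AddCommMonoid M] (F : G → G → G → M) :
    ∑ x : Fin 3 → G, F (x 1 * (x 0)⁻¹) (x 2 * (x 0)⁻¹) (x 2 * (x 1)⁻¹)
      = Fintype.card G • ∑ b, ∑ c, F b c (c * b⁻¹) := by
  rw [Fintype.sum_pi_fin_three, ← Finset.card_univ, ← Finset.sum_const]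
  refine Finset.sum_congr rfl fun a _ => ?_
  rw [← Equiv.sum_comp (Equiv.mulRight a)]
  refine Finset.sum_congr rfl fun b _ => ?_
  rw [← Equiv.sum_comp (Equiv.mulRight a)]
  simp [mul_assoc]

variable {Ω : Type*} [MeasurableSpace Ω] {μ : Measure Ω} [IsProbabilityMeasure μ]
  [MeasurableSpace G] [DiscreteMeasurableSpace G] {X : Fin 3 → Ω → G}

lemma ProbabilityTheory.iIndepFun.integral_ratios_fin_three (hX : ∀ i, Measurable (X i))
    (hunif : ∀ i, μ.map (X i) = (PMF.uniformOfFintype G).toMeasure) (hindep : iIndepFun X μ)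
    (F : G → G → G → ℝ) :
    ∫ ω, F (X 1 ω * (X 0 ω)⁻¹) (X 2 ω * (X 0 ω)⁻¹) (X 2 ω * (X 1 ω)⁻¹) ∂μ
      = (∑ b, ∑ c, F b c (c * b⁻¹)) / Fintype.card G ^ 2 := by
  rw [hindep.integral_comp_eq_sum_div hX hunif
      (fun x => F (x 1 * (x 0)⁻¹) (x 2 * (x 0)⁻¹) (x 2 * (x 1)⁻¹)),
    sum_ratios_fin_three, nsmul_eq_mul, Fintype.card_fin]
  have : (Fintype.card G : ℝ) ≠ 0 := by positivity
  field_simp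

end Ratios

open Equiv

instance permDiscreteMeasurableSpace (n : ℕ) : DiscreteMeasurableSpace (Perm (Fin n)) :=
  ⟨fun _ => MeasurableSpace.measurableSet_top⟩

lemma chMatrix_sq_add_sq {n p : ℕ} (σ : Fin p → Perm (Fin n)) {i j : Fin p} (hij : i ≠ j) :
    chMatrix σ i j ^ 2 + chMatrix σ j i ^ 2
      = fxi (σ j * (σ i)⁻¹) ^ 2 + fxi (σ j * (σ i)⁻¹)⁻¹ ^ 2 := by
  simp [chMatrix, hij, hij.symm]

lemma fxi_three (τ : Perm (Fin 3)) :
    fxi τ = if τ = 1 ∨ τ = Fin.revPerm then 1 / 4 else -1 / 8 := by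
  have hdisp : ∀ τ : Perm (Fin 3), (((τ 1 : ℤ) - τ 0).natAbs + ((τ 2 : ℤ) - τ 1).natAbs)
      = if τ = 1 ∨ τ = Fin.revPerm then 2 else 3 := by decide
  have hsum : (Finset.range (3 - 1)).attach
      = {(⟨0, by decide⟩ : {k // k ∈ Finset.range (3 - 1)}), ⟨1, by decide⟩} := by decide
  have hdispτ := congrArg (fun m : ℕ => (m : ℝ)) (hdisp τ)
  rw [fxi, hsum, Finset.sum_insert (by decide), Finset.sum_singleton]
  push_cast [Nat.cast_natAbs, apply_ite] at hdispτ ⊢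
  split_ifs at hdispτ ⊢ <;> norm_num <;> linarith

def revWeight (τ : Perm (Fin 3)) : ℕ := if τ = 1 ∨ τ = Fin.revPerm then 4 else 1

lemma fxi_inv_three (τ : Perm (Fin 3)) : fxi τ⁻¹ = fxi τ := by
  have hrev : τ⁻¹ = Fin.revPerm ↔ τ = Fin.revPerm := by
    rw [inv_eq_iff_eq_inv, Perm.inv_def, Fin.revPerm_symm]
  simp only [fxi_three, inv_eq_one, hrev]

lemma fxi_sq_add_fxi_inv_sq_three (τ : Perm (Fin 3)) :
    fxi τ ^ 2 + fxi τ⁻¹ ^ 2 = revWeight τ / 32 := by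
  rw [fxi_inv_three, fxi_three, revWeight]
  split_ifs <;> norm_num

lemma Ypair_eq_revWeight {Ω : Type*} (σ : Fin 3 → Ω → Perm (Fin 3)) {i j : Fin 3} (hij : i ≠ j) :
    Ypair σ i j = fun ω => (revWeight (σ j ω * (σ i ω)⁻¹) : ℝ) / 32 := by
  ext ω
  rw [Ypair, chMatrix_sq_add_sq _ hij, fxi_sq_add_fxi_inv_sq_three]

lemma measurable_Ypair {Ω : Type*} [MeasurableSpace Ω] {σ : Fin 3 → Ω → Perm (Fin 3)}
    (hσ : ∀ i, Measurable (σ i)) (i j : Fin 3) : Measurable (Ypair σ i j) :=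
  (measurable_of_countable fun x : Fin 3 → Perm (Fin 3) =>
    chMatrix x i j ^ 2 + chMatrix x j i ^ 2).comp (measurable_pi_lambda _ hσ)

lemma sum_sum_revWeight :
    (∑ b : Perm (Fin 3), ∑ _c : Perm (Fin 3), revWeight b = 72) ∧
      (∑ _b : Perm (Fin 3), ∑ c : Perm (Fin 3), revWeight c = 72) ∧
      ∑ b : Perm (Fin 3), ∑ c, revWeight (c * b⁻¹) = 72 := by
  decide

lemma sum_sum_revWeight_mul :
    ∑ b : Perm (Fin 3), ∑ c, revWeight b * revWeight c * revWeight (c * b⁻¹) = 360 := by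
  decide

section Expectations

variable {Ω : Type*} [MeasurableSpace Ω] {μ : Measure Ω} [IsProbabilityMeasure μ]
  {σ : Fin 3 → Ω → Perm (Fin 3)}

lemma integral_Ypair (hmeas : ∀ i, Measurable (σ i))
    (hunif : ∀ i, μ.map (σ i) = uniformPermMeasure 3) (hindep : iIndepFun σ μ) :
    ∫ ω, Ypair σ 0 1 ω ∂μ = 1 / 16 ∧ ∫ ω, Ypair σ 0 2 ω ∂μ = 1 / 16 ∧
      ∫ ω, Ypair σ 1 2 ω ∂μ = 1 / 16 := by
  obtain ⟨h01, h02, h12⟩ := sum_sum_revWeight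
  have hratio := hindep.integral_ratios_fin_three hmeas hunif
  simp only [Ypair_eq_revWeight σ (by decide : (0 : Fin 3) ≠ 1),
    Ypair_eq_revWeight σ (by decide : (0 : Fin 3) ≠ 2),
    Ypair_eq_revWeight σ (by decide : (1 : Fin 3) ≠ 2)]
  refine ⟨(hratio fun b _ _ => (revWeight b : ℝ) / 32).trans ?_,
    (hratio fun _ c _ => (revWeight c : ℝ) / 32).trans ?_,
    (hratio fun _ _ d => (revWeight d : ℝ) / 32).trans ?_⟩ <;>
  simp only [← Finset.sum_div, ← Nat.cast_sum, h01, h02, h12, Fintype.card_perm,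
    Fintype.card_fin] <;> norm_num

lemma integral_Ypair_mul_Ypair_mul_Ypair (hmeas : ∀ i, Measurable (σ i))
    (hunif : ∀ i, μ.map (σ i) = uniformPermMeasure 3) (hindep : iIndepFun σ μ) :
    ∫ ω, Ypair σ 0 1 ω * Ypair σ 0 2 ω * Ypair σ 1 2 ω ∂μ = 5 / 16384 := by
  simp only [Ypair_eq_revWeight σ (by decide : (0 : Fin 3) ≠ 1),
    Ypair_eq_revWeight σ (by decide : (0 : Fin 3) ≠ 2),
    Ypair_eq_revWeight σ (by decide : (1 : Fin 3) ≠ 2)]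
  refine (hindep.integral_ratios_fin_three hmeas hunif fun b c d =>
    (revWeight b : ℝ) / 32 * (revWeight c / 32) * (revWeight d / 32)).trans ?_
  simp only [div_mul_div_comm, ← Finset.sum_div, ← Nat.cast_mul, ← Nat.cast_sum,
    sum_sum_revWeight_mul, Fintype.card_perm, Fintype.card_fin]
  norm_num

end Expectations

/-- **A counterexample to mutual independence for `n = 3`.**
For the Chatterjee matrix `Ξ` built from `3` independent uniform random permutations of
`{1,2,3}`, with `Y_{ij} = Ξ(i,j)² + Ξ(j,i)²`, we have `E[Y₁₂ Y₁₃ Y₂₃] = 5/16384`, while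
`E[Y₁₂]·E[Y₁₃]·E[Y₂₃] = 1/4096`; in particular `Y₁₂, Y₁₃, Y₂₃` are not mutually independent. -/
theorem chatterjee_n3_not_independent
    {Ω : Type*} [MeasurableSpace Ω] (μ : Measure Ω) [IsProbabilityMeasure μ]
    (σ : Fin 3 → Ω → Equiv.Perm (Fin 3))
    (hmeas : ∀ i, Measurable (σ i))
    (hunif : ∀ i, μ.map (σ i) = uniformPermMeasure 3)
    (hindep : iIndepFun (m := fun _ => permMeasurableSpace 3) σ μ) :
    (∫ ω, Ypair σ 0 1 ω * Ypair σ 0 2 ω * Ypair σ 1 2 ω ∂μ) = 5 / 16384 ∧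
      (∫ ω, Ypair σ 0 1 ω ∂μ) * (∫ ω, Ypair σ 0 2 ω ∂μ) * (∫ ω, Ypair σ 1 2 ω ∂μ)
          = 1 / 4096 ∧
      ¬ iIndepFun (m := fun _ : Fin 3 => (inferInstance : MeasurableSpace ℝ))
          ![Ypair σ 0 1, Ypair σ 0 2, Ypair σ 1 2] μ := by
  have hprod := integral_Ypair_mul_Ypair_mul_Ypair hmeas hunif hindep
  obtain ⟨h01, h02, h12⟩ := integral_Ypair hmeas hunif hindep
  refine ⟨hprod, by rw [h01, h02, h12]; norm_num, fun hY => ?_⟩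
  have hfactor := hY.integral_fun_prod_eq_prod_integral fun i => by
    fin_cases i <;> exact (measurable_Ypair hmeas _ _).aestronglyMeasurable
  simp only [Fin.prod_univ_three, Matrix.cons_val_zero, Matrix.cons_val_one,
    Matrix.cons_val_two, Matrix.tail_cons, Matrix.head_cons] at hfactor
  rw [hprod, h01, h02, h12] at hfactor
  norm_num at hfactor

end
end

section
/- Let n ≥ 1 and let (x_1,y_1),…,(x_L,y_L) be pairwise distinct ordered pairs of elements of {1,…,n} with x_k ≠ y_k for every k. Then there exists a permutation σ of {1,…,n} satisfying σ(x_k) + 1 = σ(y_k) for all k ∈ {1,…,L} if and only if the directed graph with edges x_k → y_k is a disjoint union of directed chains; equivalently, every element of {1,…,n} appears at most once among the x_k's (out-degree ≤ 1), at most once among the y_k's (in-degree ≤ 1), and the directed graph contains no directed cycle. -/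
noncomputable section

namespace ExistsPermSuccAux

variable {α : Type*} [DecidableEq α]

/-- insert `b` right after the first occurrence of `a`. -/
def insAfter (a b : α) : List α → List α
  | [] => []
  | c :: t => if c = a then c :: b :: t else c :: insAfter a b t

lemma insAfter_perm (a b : α) {m : List α} (ha : a ∈ m) : (insAfter a b m).Perm (b :: m) := by
  induction m with
  | nil => simp at ha
  | cons c t ih =>
    rw [insAfter]
    by_cases hc : c = a
    · simp [hc]
      exact List.Perm.swap _ _ _
    · simp [hc]
      rcases List.mem_cons.mp ha with h | h
      · exact absurd h.symm hc
      · exact ((ih h).cons c).trans (List.Perm.swap _ _ _)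

lemma infix_insAfter {a b u v : α} {m : List α} (h : [u, v] <:+: m) (hu : u ≠ a) :
    [u, v] <:+: insAfter a b m := by
  induction m with
  | nil => simp at h
  | cons c t ih =>
    rw [insAfter]
    rcases List.infix_cons_iff.mp h with hp | ht
    · obtain ⟨r, hr⟩ := hp
      simp at hr
      obtain ⟨rfl, rfl⟩ : c = u ∧ t = v :: r := by
        cases hr; simp_all
      rw [if_neg hu, insAfter]
      by_cases hv : v = a
      · rw [if_pos hv]
        exact ⟨[], b :: r, by simp⟩
      · rw [if_neg hv]
        exact ⟨[], _, rfl⟩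
    · by_cases hc : c = a
      · rw [if_pos hc]
        exact ht.trans ((t.suffix_cons b).trans ((b :: t).suffix_cons c)).isInfix
      · rw [if_neg hc]
        exact (ih ht).trans (List.infix_cons_iff.mpr (Or.inr (List.infix_refl _))) |>.trans
          (List.infix_refl _)

lemma infix_insAfter_self {a b : α} {m : List α} (ha : a ∈ m) : [a, b] <:+: insAfter a b m := by
  induction m with
  | nil => simp at ha
  | cons c t ih =>
    rw [insAfter]
    by_cases hc : c = a
    · rw [if_pos hc, hc]
      exact ⟨[], t, rfl⟩
    · rw [if_neg hc]
      rcases List.mem_cons.mp ha with h | h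
      · exact absurd h.symm hc
      · exact (ih h).trans (List.infix_cons_iff.mpr (Or.inr (List.infix_refl _)))

lemma infix_erase {b u v : α} {l : List α} (h : [u, v] <:+: l) (hu : u ≠ b) (hv : v ≠ b) :
    [u, v] <:+: l.erase b := by
  induction l with
  | nil => simp at h
  | cons c t ih =>
    by_cases hc : c = b
    · subst hc
      rw [List.erase_cons_head]
      rcases List.infix_cons_iff.mp h with hp | ht
      · obtain ⟨r, hr⟩ := hp
        simp at hr
        simp_all
      · exact ht
    · rw [List.erase_cons_tail (by simpa using hc)]
      rcases List.infix_cons_iff.mp h with hp | ht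
      · obtain ⟨r, hr⟩ := hp
        simp at hr
        obtain ⟨rfl, rfl⟩ : c = u ∧ t = v :: r := by cases hr; simp_all
        rw [List.erase_cons_tail (by simpa using hv)]
        exact ⟨[], _, rfl⟩
      · exact (ih ht).trans (List.infix_cons_iff.mpr (Or.inr (List.infix_refl _)))

variable {n L : ℕ} {x y : Fin L → Fin n}

/-- existence of an edge whose target has no outgoing edge within `s`. -/
lemma exists_terminal (s : Finset (Fin L)) (hs : s.Nonempty)
    (hacyc : ∀ a : Fin n, ¬ Relation.TransGen (fun a b => ∃ k, x k = a ∧ y k = b) a a) :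
    ∃ k ∈ s, ∀ j ∈ s, x j ≠ y k := by
  by_contra hcon
  push_neg at hcon
  set R : Fin n → Fin n → Prop := fun a b => ∃ k, x k = a ∧ y k = b with hR
  have hf : ∀ k : {k // k ∈ s}, ∃ j : {k // k ∈ s}, x j.1 = y k.1 := by
    rintro ⟨k, hk⟩
    obtain ⟨j, hj, hjx⟩ := hcon k hk
    exact ⟨⟨j, hj⟩, hjx⟩
  choose f hfx using hf
  obtain ⟨k0, hk0⟩ := hs
  set v : ℕ → Fin n := fun i => y (f^[i] ⟨k0, hk0⟩).1 with hv
  have hstep : ∀ i, R (v i) (v (i+1)) := by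
    intro i
    refine ⟨(f^[i+1] ⟨k0, hk0⟩).1, ?_, rfl⟩
    rw [Function.iterate_succ_apply']
    exact hfx _
  have hchain : ∀ d i, Relation.TransGen R (v i) (v (i + d + 1)) := by
    intro d
    induction d with
    | zero => exact fun i => Relation.TransGen.single (hstep i)
    | succ d ih =>
        exact fun i => (ih i).tail
          (by have := hstep (i + d + 1); rwa [show i+(d+1)+1 = (i+d+1)+1 by ring])
  obtain ⟨i, j, hij, hvij⟩ := Finite.exists_ne_map_eq_of_infinite v
  rcases hij.lt_or_gt with h | h
  · exact hacyc (v i)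
      (by have := hchain (j - i - 1) i; rwa [show i + (j-i-1) + 1 = j by omega, ← hvij] at this)
  · exact hacyc (v j)
      (by have := hchain (i - j - 1) j; rwa [show j + (i-j-1) + 1 = i by omega, hvij] at this)

lemma build (hx : Function.Injective x) (hy : Function.Injective y)
    (hxy : ∀ k, x k ≠ y k)
    (hacyc : ∀ a : Fin n, ¬ Relation.TransGen (fun a b => ∃ k, x k = a ∧ y k = b) a a)
    (s : Finset (Fin L)) :
    ∃ l : List (Fin n), l.Nodup ∧ (∀ v, v ∈ l) ∧ ∀ k ∈ s, [x k, y k] <:+: l := by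
  induction s using Finset.strongInduction with
  | _ s ih =>
    rcases s.eq_empty_or_nonempty with rfl | hs
    · exact ⟨List.finRange n, List.nodup_finRange n, List.mem_finRange, by simp⟩
    obtain ⟨k, hk, hterm⟩ := exists_terminal s hs hacyc
    obtain ⟨l, hnd, hmem, hinf⟩ := ih (s.erase k) (Finset.erase_ssubset hk)
    set a := x k with hadef
    set b := y k with hbdef
    have hab : a ≠ b := hxy k
    set m := l.erase b with hm
    have ham : a ∈ m := (List.mem_erase_of_ne hab).mpr (hmem a)
    have hmnd : m.Nodup := hnd.erase b
    have hbm : b ∉ m := by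
      intro hb
      exact ((List.Nodup.mem_erase_iff hnd).mp hb).1 rfl
    refine ⟨insAfter a b m, ?_, ?_, ?_⟩
    · exact ((insAfter_perm a b ham).nodup_iff).mpr (List.nodup_cons.mpr ⟨hbm, hmnd⟩)
    · intro v
      have : v ∈ b :: m := by
        by_cases hv : v = b
        · simp [hv]
        · exact List.mem_cons_of_mem _ ((List.mem_erase_of_ne hv).mpr (hmem v))
      exact ((insAfter_perm a b ham).mem_iff).mpr this
    · intro j hj
      by_cases hjk : j = k
      · subst hjk
        exact infix_insAfter_self ham
      · have h1 : [x j, y j] <:+: l := hinf j (Finset.mem_erase.mpr ⟨hjk, hj⟩)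
        have h2 : x j ≠ b := hterm j hj
        have h3 : y j ≠ b := fun h => hjk (hy h)
        have h4 : x j ≠ a := fun h => hjk (hx h)
        exact infix_insAfter (infix_erase h1 h2 h3) h4

end ExistsPermSuccAux

open ExistsPermSuccAux in
/-- **Existence of permutations realizing consecutive-value constraints.**
Given pairwise distinct ordered pairs `(x k, y k)` of elements of `{1,…,n}` with `x k ≠ y k`,
there exists a permutation `σ` with `σ(x k) + 1 = σ(y k)` for all `k` if and only if the
directed graph with edges `x k → y k` is a disjoint union of directed chains; equivalently,
each element appears at most once among the `x k`'s, at most once among the `y k`'s, and the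
directed graph contains no directed cycle. -/
theorem exists_perm_succ_constraints_iff_chains
    (n L : ℕ) (x y : Fin L → Fin n)
    (hxy : ∀ k, x k ≠ y k)
    (hdist : Function.Injective (fun k => (x k, y k))) :
    (∃ σ : Equiv.Perm (Fin n), ∀ k, ((σ (x k) : ℕ) + 1 = (σ (y k) : ℕ))) ↔
      (Function.Injective x ∧ Function.Injective y ∧
        ∀ a : Fin n, ¬ Relation.TransGen (fun a b => ∃ k, x k = a ∧ y k = b) a a) := by
  constructor
  · rintro ⟨σ, hσ⟩
    have hval : ∀ a b : Fin n, (∃ k, x k = a ∧ y k = b) → (σ a : ℕ) + 1 = (σ b : ℕ) := by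
      rintro a b ⟨k, rfl, rfl⟩
      exact hσ k
    refine ⟨?_, ?_, ?_⟩
    · intro k k' h
      have hy' : y k = y k' := by
        have : (σ (y k) : ℕ) = (σ (y k') : ℕ) := by rw [← hσ k, ← hσ k', h]
        exact σ.injective (Fin.val_injective this)
      have := hdist (show (fun k => (x k, y k)) k = (fun k => (x k, y k)) k' by
        simp [h, hy'])
      exact this
    · intro k k' h
      have hx' : x k = x k' := by
        have : (σ (x k) : ℕ) + 1 = (σ (x k') : ℕ) + 1 := by rw [hσ k, hσ k', h]
        exact σ.injective (Fin.val_injective (by omega))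
      exact hdist (show (fun k => (x k, y k)) k = (fun k => (x k, y k)) k' by
        simp [h, hx'])
    · intro a ha
      have hmono : ∀ c d : Fin n, Relation.TransGen (fun a b => ∃ k, x k = a ∧ y k = b) c d →
          (σ c : ℕ) < (σ d : ℕ) := by
        intro c d h
        induction h with
        | single h => have := hval _ _ h; omega
        | tail _ h ih => have := hval _ _ h; omega
      exact lt_irrefl _ (hmono a a ha)
  · rintro ⟨hx, hy, hacyc⟩
    obtain ⟨l, hnd, hmem, hinf⟩ := build hx hy hxy hacyc Finset.univ
    have hlen : l.length = n := by
      have h1 : l.toFinset = Finset.univ := Finset.eq_univ_iff_forall.mpr (fun v => by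
        simpa using hmem v)
      have h2 := List.toFinset_card_of_nodup hnd
      rw [h1, Finset.card_univ, Fintype.card_fin] at h2
      omega
    have hinj : Function.Injective (fun i : Fin n => l.get (Fin.cast hlen.symm i)) := by
      intro i j h
      have := List.nodup_iff_injective_get.mp hnd h
      simpa [Fin.ext_iff] using this
    set e : Fin n ≃ Fin n :=
      Equiv.ofBijective _ ((Finite.injective_iff_bijective).mp hinj) with he
    refine ⟨e.symm, ?_⟩
    intro k
    obtain ⟨p, q, hl⟩ := hinf k (Finset.mem_univ k)
    have hql : l.length = p.length + (2 + q.length) := by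
      rw [← hl]; simp; omega
    have hp1 : p.length < n := by omega
    have hp2 : p.length + 1 < n := by omega
    have hgx : e ⟨p.length, hp1⟩ = x k := by
      show l.get _ = x k
      subst hl
      rw [List.get_eq_getElem]
      simp only [Fin.coe_cast]
      rw [List.getElem_append_left (by simp)]
      rw [List.getElem_append_right (le_refl _)]
      simp
    have hgy : e ⟨p.length + 1, hp2⟩ = y k := by
      show l.get _ = y k
      subst hl
      rw [List.get_eq_getElem]
      simp only [Fin.coe_cast]
      rw [List.getElem_append_left (by simp)]
      rw [List.getElem_append_right (by omega)]
      simp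
    rw [← hgx, ← hgy, Equiv.symm_apply_apply, Equiv.symm_apply_apply]

end
end

section
/- For all integers n ≥ 0 and m ≥ 1, the m-fold convolution of Catalan numbers satisfies Σ over all (i_1,…,i_m) ∈ ℕ^m with i_1 + ⋯ + i_m = n of Π_{j=1}^{m} C_{i_j} equals (m/(2n+m)) · C(2n+m, n); equivalently, (2n+m) · Σ_{i_1+⋯+i_m=n} Π_{j=1}^{m} C_{i_j} = m · C(2n+m, n), where C_i denotes the i-th Catalan number and C(a,b) the binomial coefficient. -/
/-! If `C(x) = ∑ Cₙ xⁿ` is the Catalan generating function, the sum is the `n`-th coefficient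
of `C^m`. The functional equation `C = 1 + x C²` gives
`[xⁿ⁺¹] C^(m+1) = [xⁿ⁺¹] C^m + [xⁿ] C^(m+2)`, and the ballot numbers `m/(2n+m) · C(2n+m, n)`
satisfy the same recurrence with the same boundary values at `n = 0` and at `m = 0`. -/

namespace PowerSeries

theorem coeff_pow_eq_sum_antidiagonalTuple {R : Type*} [CommSemiring R] (φ : R⟦X⟧) (m n : ℕ) :
    coeff n (φ ^ m) = ∑ v ∈ Finset.Nat.antidiagonalTuple m n, ∏ j, coeff (v j) φ := by
  rw [← Fin.prod_const, coeff_prod]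
  refine Finset.sum_equiv Finsupp.equivFunOnFinite (fun l => ?_) (fun _ _ => rfl)
  simp [Finset.Nat.mem_antidiagonalTuple]

theorem coeff_succ_catalanSeries_pow_succ (m n : ℕ) :
    coeff (n + 1) (catalanSeries ^ (m + 1)) =
      coeff (n + 1) (catalanSeries ^ m) + coeff n (catalanSeries ^ (m + 2)) := by
  rw [pow_succ]
  nth_rw 2 [← catalanSeries_sq_mul_X_add_one]
  rw [mul_add, mul_one, map_add, ← mul_assoc, ← pow_add, coeff_succ_mul_X, add_comm]

end PowerSeries

open PowerSeries

theorem choose_ballot_recurrence (m n : ℕ) :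
    (2 * n + m + 2) * ((m + 1) * (2 * n + m + 3).choose (n + 1)) =
      (2 * n + m + 3) *
        (m * (2 * n + m + 2).choose (n + 1) + (m + 2) * (2 * n + m + 2).choose n) := by
  have hpascal := Nat.choose_succ_succ (2 * n + m + 2) n
  have hratio := Nat.choose_succ_right_eq (2 * n + m + 2) n
  rw [show 2 * n + m + 2 - n = n + m + 2 by omega] at hratio
  rw [hpascal]
  nlinarith [hratio]

theorem mul_coeff_catalanSeries_pow (n m : ℕ) :
    (2 * n + m) * coeff n (catalanSeries ^ m) = m * (2 * n + m).choose n := by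
  induction n generalizing m with
  | zero => simp
  | succ n ih =>
    induction m with
    | zero => simp
    | succ m ihm =>
      have hcoeff_pow : (2 * n + m + 2) * coeff (n + 1) (catalanSeries ^ m) =
          m * (2 * n + m + 2).choose (n + 1) := by
        simpa only [show 2 * (n + 1) + m = 2 * n + m + 2 by ring] using ihm
      have hcoeff_pow_add_two : (2 * n + m + 2) * coeff n (catalanSeries ^ (m + 2)) =
          (m + 2) * (2 * n + m + 2).choose n := ih (m + 2)
      apply Nat.eq_of_mul_eq_mul_left (show 0 < 2 * n + m + 2 by omega)
      calc (2 * n + m + 2) * ((2 * (n + 1) + (m + 1)) * coeff (n + 1) (catalanSeries ^ (m + 1)))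
          = (2 * n + m + 3) * ((2 * n + m + 2) * coeff (n + 1) (catalanSeries ^ m) +
              (2 * n + m + 2) * coeff n (catalanSeries ^ (m + 2))) := by
            rw [coeff_succ_catalanSeries_pow_succ]; ring
        _ = (2 * n + m + 2) * ((m + 1) * (2 * (n + 1) + (m + 1)).choose (n + 1)) := by
            rw [hcoeff_pow, hcoeff_pow_add_two, ← choose_ballot_recurrence]; ring_nf

theorem catalan_convolution_general (n m : ℕ) :
    (2 * n + m) *
        ∑ v ∈ Finset.Nat.antidiagonalTuple m n, ∏ j, catalan (v j) =
      m * Nat.choose (2 * n + m) n := by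
  simpa [coeff_pow_eq_sum_antidiagonalTuple] using mul_coeff_catalanSeries_pow n m

/-- **`m`-fold convolution of Catalan numbers.**
For all `n ≥ 0` and `m ≥ 1`,
`(2n+m) · ∑_{i₁+⋯+i_m = n} ∏_j C_{i_j} = m · C(2n+m, n)`,
where `C_i` is the `i`-th Catalan number and `C(a,b)` the binomial coefficient; equivalently,
the convolution equals `(m/(2n+m))·C(2n+m, n)`. -/
theorem catalan_convolution (n m : ℕ) (hm : 1 ≤ m) :
    (2 * n + m) *
        ∑ v ∈ Finset.Nat.antidiagonalTuple m n, ∏ j, catalan (v j) =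
      m * Nat.choose (2 * n + m) n :=
  catalan_convolution_general n m
end
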